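/- arXiv:2508.14353 — 2 statements merged into one kernel-verified Lean document; each statement's English description precedes it below -/
import Mathlib

section
/- Let f ∈ C[x1,...,xs] be weighted homogeneous of degree d with respect to positive weights w1 ≥ ... ≥ ws with d ≥ 2w1, having an isolated singularity. Let S be any set of weighted homogeneous polynomials each of weighted degree at least d. Then the graded algebra A = C[x1,...,xs]/⟨f, S⟩ admits no nonzero weighted homogeneous C-linear derivation of negative weighted degree. -/
/-!
Choose lifts `cᵢ` of `δ(xᵢ)`: every monomial of `cᵢ` has weight `< wᵢ`, and `δ` is induced by the
derivation `∑ cᵢ ∂ᵢ` of the polynomial ring. As `f ∈ I`, the polynomial `∑ cᵢ ∂ᵢf` lies in `I`; its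
monomials have weight `< d` while `I` is generated in weights `≥ d`, so `∑ cᵢ ∂ᵢf = 0`.

Since `f` has an isolated singularity, the Nullstellensatz puts a power of every variable into the
Jacobian ideal `(∂₁f, …, ∂ₛf)`, which therefore contains a regular sequence of length `s`. Over the
infinite field `ℂ`, prime avoidance makes a generic invertible linear change of `∂₁f, …, ∂ₛf` a
regular sequence; its syzygies are Koszul, so every `cᵢ` lies in the Jacobian ideal. That ideal is
generated in weights `d - wⱼ ≥ d - w₁ ≥ w₁`, above the weights of `cᵢ`, hence `cᵢ = 0` and `δ = 0`.
-/

namespace Ideal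

variable {R : Type*} [CommRing R]

/- Regularity on `R ⧸ K` phrased through `K` itself, so that cutting down by `r` just replaces `K`
by `K ⊔ span {r}`; `isSMulRegularQuot_iff` relates it to `IsSMulRegular (R ⧸ K) r`. -/
def IsSMulRegularQuot (K : Ideal R) (r : R) : Prop := ∀ u, r * u ∈ K → u ∈ K

def IsWeaklyRegularQuot : Ideal R → List R → Prop
  | _, [] => True
  | K, r :: rs => K.IsSMulRegularQuot r ∧ (K ⊔ span {r}).IsWeaklyRegularQuot rs

def HasRegularSeqQuot (J K : Ideal R) (n : ℕ) : Prop :=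
  ∃ rs : List R, rs.length = n ∧ (∀ r ∈ rs, r ∈ J) ∧ K.IsWeaklyRegularQuot rs

variable {J K : Ideal R} {a b r : R}

theorem isSMulRegularQuot_iff : K.IsSMulRegularQuot r ↔ IsSMulRegular (R ⧸ K) r := by
  refine ⟨fun h x y hxy => ?_, fun h u hu => ?_⟩
  · obtain ⟨x, rfl⟩ := Quotient.mk_surjective x
    obtain ⟨y, rfl⟩ := Quotient.mk_surjective y
    simp only [Algebra.smul_def, Quotient.algebraMap_eq, ← map_mul, Quotient.eq] at hxy ⊢
    exact h _ (by rwa [mul_sub])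
  · rw [← Quotient.eq_zero_iff_mem] at hu ⊢
    exact h.right_eq_zero_of_smul (by rwa [Algebra.smul_def, Quotient.algebraMap_eq, ← map_mul])

theorem isSMulRegularQuot_iff_forall_notMem [IsNoetherianRing R] :
    K.IsSMulRegularQuot r ↔ ∀ p ∈ associatedPrimes R (R ⧸ K), r ∉ p := by
  have := Set.ext_iff.mp (biUnion_associatedPrimes_eq_compl_regular R (R ⧸ K)) r
  simp only [Set.mem_iUnion, Set.mem_compl_iff, Set.mem_ofPred_eq, SetLike.mem_coe] at this
  rw [isSMulRegularQuot_iff, ← not_iff_not, ← this]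
  simp

theorem IsSMulRegularQuot.colon_le (hr : K.IsSMulRegularQuot r) (hrJ : r ∈ J) :
    K.colon J ≤ K := fun v hv =>
  hr v (by simpa [mul_comm] using Submodule.mem_colon.mp hv r hrJ)

theorem not_le_of_mem_associatedPrimes [IsNoetherianRing R] (hK : K.colon J ≤ K) {p : Ideal R}
    (hp : p ∈ associatedPrimes R (R ⧸ K)) : ¬ J ≤ p := by
  obtain ⟨hprime, x, rfl⟩ := isAssociatedPrime_iff.mp hp
  obtain ⟨x, rfl⟩ := Quotient.mk_surjective x
  intro hJ
  have hxK : x ∈ K := hK <| Submodule.mem_colon.mpr fun t ht => by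
    have := Submodule.mem_colon_singleton.mp (hJ ht)
    rwa [Algebra.smul_def, Quotient.algebraMap_eq, ← map_mul, Submodule.mem_bot,
      Quotient.eq_zero_iff_mem, mul_comm] at this
  apply hprime.ne_top
  rw [Quotient.eq_zero_iff_mem.mpr hxK, Submodule.colon_eq_top_iff_subset]
  simp

theorem exists_mem_forall_isSMulRegularQuot [IsNoetherianRing R] (Ks : Finset (Ideal R))
    (hKs : ∀ K ∈ Ks, K.colon J ≤ K) : ∃ c ∈ J, ∀ K ∈ Ks, K.IsSMulRegularQuot c := by
  let P := ⋃ K ∈ Ks, associatedPrimes R (R ⧸ K)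
  have hP : P.Finite := Ks.finite_toSet.biUnion fun K _ => associatedPrimes.finite R (R ⧸ K)
  have hJP : ¬ (J : Set R) ⊆ ⋃ p ∈ P, p := by
    rw [subset_union_prime_finite hP ⊥ ⊥ fun p hp _ _ => ?_]
    · rintro ⟨p, hp, hJp⟩
      obtain ⟨K, hK, hpK⟩ := Set.mem_iUnion₂.mp hp
      exact not_le_of_mem_associatedPrimes (hKs K hK) hpK hJp
    · obtain ⟨K, -, hpK⟩ := Set.mem_iUnion₂.mp hp
      exact hpK.isPrime
  obtain ⟨c, hcJ, hc⟩ := Set.not_subset.mp hJP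
  refine ⟨c, hcJ, fun K hK => isSMulRegularQuot_iff_forall_notMem.mpr fun p hp hcp => hc ?_⟩
  exact Set.mem_biUnion (Set.mem_biUnion hK hp) hcp

theorem IsSMulRegularQuot.sup_span_singleton (ha : K.IsSMulRegularQuot a)
    (hb : (K ⊔ span {a}).IsSMulRegularQuot b) : (K ⊔ span {b}).IsSMulRegularQuot a := by
  intro u hu
  obtain ⟨k, hk, _, hy, hky⟩ := Submodule.mem_sup.mp hu
  obtain ⟨t, rfl⟩ := mem_span_singleton'.mp hy
  have hbt : b * t ∈ K ⊔ span {a} := by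
    rw [show b * t = a * u - k by linear_combination hky]
    exact sub_mem (mem_sup_right (mem_span_singleton'.mpr ⟨u, mul_comm u a⟩)) (mem_sup_left hk)
  obtain ⟨k', hk', _, hz, hkz⟩ := Submodule.mem_sup.mp (hb t hbt)
  obtain ⟨s, rfl⟩ := mem_span_singleton'.mp hz
  have hus : u - s * b ∈ K := ha _ <| by
    rw [show a * (u - s * b) = k + k' * b by linear_combination -hky - b * hkz]
    exact add_mem hk (mul_mem_right _ _ hk')
  rw [show u = (u - s * b) + s * b by ring]
  exact add_mem (mem_sup_left hus) (mem_sup_right (mem_span_singleton'.mpr ⟨s, rfl⟩))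

theorem colon_sup_span_singleton_le (haJ : a ∈ J) (ha : K.IsSMulRegularQuot a)
    (hJa : (K ⊔ span {a}).colon J ≤ K ⊔ span {a}) (hb : K.IsSMulRegularQuot b) :
    (K ⊔ span {b}).colon J ≤ K ⊔ span {b} := by
  intro v hv
  have hvJ : ∀ t ∈ J, ∃ k ∈ K, ∃ s, v * t = k + s * b := fun t ht => by
    obtain ⟨k, hk, _, hy, hky⟩ := Submodule.mem_sup.mp (Submodule.mem_colon.mp hv t ht)
    obtain ⟨s, rfl⟩ := mem_span_singleton'.mp hy
    exact ⟨k, hk, s, hky.symm⟩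
  obtain ⟨k₁, hk₁, v₁, hv₁⟩ := hvJ a haJ
  have hv₁J : v₁ ∈ (K ⊔ span {a}).colon J := Submodule.mem_colon.mpr fun t ht => by
    obtain ⟨k, hk, s, hs⟩ := hvJ t ht
    have hdiff : a * s - t * v₁ ∈ K := hb _ <| by
      rw [show b * (a * s - t * v₁) = t * k₁ - a * k by linear_combination t * hv₁ - a * hs]
      exact sub_mem (mul_mem_left _ _ hk₁) (mul_mem_left _ _ hk)
    rw [smul_eq_mul, show v₁ * t = s * a - (a * s - t * v₁) by ring]
    exact sub_mem (mem_sup_right (mem_span_singleton'.mpr ⟨s, rfl⟩)) (mem_sup_left hdiff)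
  obtain ⟨k₃, hk₃, _, hy, hky⟩ := Submodule.mem_sup.mp (hJa hv₁J)
  obtain ⟨s, rfl⟩ := mem_span_singleton'.mp hy
  have hvs : v - s * b ∈ K := ha _ <| by
    rw [show a * (v - s * b) = k₁ + k₃ * b by linear_combination hv₁ - b * hky]
    exact add_mem hk₁ (mul_mem_right _ _ hk₃)
  rw [show v = (v - s * b) + s * b by ring]
  exact add_mem (mem_sup_left hvs) (mem_sup_right (mem_span_singleton'.mpr ⟨s, rfl⟩))

theorem hasRegularSeqQuot_zero : J.HasRegularSeqQuot K 0 := ⟨[], rfl, by simp, trivial⟩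

theorem hasRegularSeqQuot_succ_iff {n : ℕ} : J.HasRegularSeqQuot K (n + 1) ↔
    ∃ r ∈ J, K.IsSMulRegularQuot r ∧ J.HasRegularSeqQuot (K ⊔ span {r}) n := by
  constructor
  · rintro ⟨_ | ⟨r, rs⟩, hlen, hJ, hr, hrs⟩
    · simp at hlen
    · exact ⟨r, hJ r (by simp), hr, rs, by simpa using hlen,
        fun x hx => hJ x (List.mem_cons_of_mem r hx), hrs⟩
  · rintro ⟨r, hrJ, hr, rs, hlen, hJ, hrs⟩
    exact ⟨r :: rs, by simp [hlen], by simpa [hrJ] using hJ, hr, hrs⟩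

theorem HasRegularSeqQuot.colon_le {n : ℕ} (h : J.HasRegularSeqQuot K (n + 1)) :
    K.colon J ≤ K := by
  obtain ⟨r, hrJ, hr, -⟩ := hasRegularSeqQuot_succ_iff.mp h
  exact hr.colon_le hrJ

theorem HasRegularSeqQuot.sup_span_singleton [IsNoetherianRing R] {n : ℕ}
    (h : J.HasRegularSeqQuot K (n + 1)) (hbJ : b ∈ J) (hb : K.IsSMulRegularQuot b) :
    J.HasRegularSeqQuot (K ⊔ span {b}) n := by
  induction n generalizing K b with
  | zero => exact hasRegularSeqQuot_zero
  | succ n ih =>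
    -- Take `c ∈ J` regular modulo `K ⊔ span {a}` and `K ⊔ span {b}`, put it in place of `a`,
    -- then trade `c` for `b`.
    obtain ⟨a, haJ, ha, hrest⟩ := hasRegularSeqQuot_succ_iff.mp h
    classical
    obtain ⟨c, hcJ, hc⟩ := exists_mem_forall_isSMulRegularQuot {K ⊔ span {a}, K ⊔ span {b}} <| by
      simp only [Finset.mem_insert, Finset.mem_singleton, forall_eq_or_imp, forall_eq]
      exact ⟨hrest.colon_le, colon_sup_span_singleton_le haJ ha hrest.colon_le hb⟩
    have hcKa : (K ⊔ span {a}).IsSMulRegularQuot c := hc _ (by simp)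
    have hcKb : (K ⊔ span {b}).IsSMulRegularQuot c := hc _ (by simp)
    have hKc : J.HasRegularSeqQuot (K ⊔ span {c}) (n + 1) := by
      refine hasRegularSeqQuot_succ_iff.mpr ⟨a, haJ, ha.sup_span_singleton hcKa, ?_⟩
      rw [sup_right_comm]
      exact ih hrest hcJ hcKa
    have hKcb := ih hKc hbJ (hb.sup_span_singleton hcKb)
    rw [sup_right_comm] at hKcb
    exact hasRegularSeqQuot_succ_iff.mpr ⟨c, hcJ, hcKb, hKcb⟩

theorem isWeaklyRegularQuot_append {rs₁ rs₂ : List R} : K.IsWeaklyRegularQuot (rs₁ ++ rs₂) ↔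
    K.IsWeaklyRegularQuot rs₁ ∧ (K ⊔ ofList rs₁).IsWeaklyRegularQuot rs₂ := by
  induction rs₁ generalizing K with
  | nil => simp [IsWeaklyRegularQuot]
  | cons r rs ih => simp [IsWeaklyRegularQuot, ih, and_assoc, sup_assoc]

theorem ofList_ofFn {n : ℕ} (θ : Fin n → R) : ofList (List.ofFn θ) = span (Set.range θ) := by
  simp [ofList, List.mem_ofFn]
  rfl

theorem mem_sup_span_of_dotProduct_mem {n : ℕ} {θ c : Fin n → R}
    (hθ : K.IsWeaklyRegularQuot (List.ofFn θ)) (hc : c ⬝ᵥ θ ∈ K) (i : Fin n) :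
    c i ∈ K ⊔ span (Set.range θ) := by
  induction n with
  | zero => exact i.elim0
  | succ n ih =>
    set θ' := θ ∘ Fin.castSucc
    set K' := K ⊔ span (Set.range θ')
    rw [List.ofFn_succ', List.concat_eq_append, isWeaklyRegularQuot_append, ofList_ofFn] at hθ
    obtain ⟨hθ', hlast, -⟩ := hθ
    have hspan : K' ≤ K ⊔ span (Set.range θ) :=
      sup_le_sup_left (span_mono (Set.range_comp_subset_range _ _)) K
    have hsplit : c ⬝ᵥ θ = (c ∘ Fin.castSucc) ⬝ᵥ θ' + c (Fin.last n) * θ (Fin.last n) :=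
      Fin.sum_univ_castSucc _
    have hcθ' : (c ∘ Fin.castSucc) ⬝ᵥ θ' ∈ span (Set.range θ') :=
      mem_span_range_iff_exists_fun.mpr ⟨_, rfl⟩
    have hlastK' : c (Fin.last n) ∈ K' := hlast _ <| by
      rw [show θ (Fin.last n) * c (Fin.last n) = c ⬝ᵥ θ - (c ∘ Fin.castSucc) ⬝ᵥ θ' by
        rw [hsplit]; ring]
      exact sub_mem (mem_sup_left hc) (mem_sup_right hcθ')
    obtain ⟨k, hk, _, hy, hky⟩ := Submodule.mem_sup.mp hlastK'
    obtain ⟨r, rfl⟩ := mem_span_range_iff_exists_fun.mp hy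
    change k + r ⬝ᵥ θ' = _ at hky
    have hc' : (c ∘ Fin.castSucc + θ (Fin.last n) • r) ⬝ᵥ θ' ∈ K := by
      rw [show (c ∘ Fin.castSucc + θ (Fin.last n) • r) ⬝ᵥ θ' = c ⬝ᵥ θ - θ (Fin.last n) * k by
        rw [add_dotProduct, smul_dotProduct, hsplit, smul_eq_mul, ← hky]; ring]
      exact sub_mem hc (mul_mem_left _ _ hk)
    refine Fin.lastCases (hspan hlastK') (fun j => ?_) i
    rw [show c j.castSucc = (c ∘ Fin.castSucc + θ (Fin.last n) • r) j - r j * θ (Fin.last n) by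
      simp [mul_comm]]
    exact sub_mem (hspan (ih hθ' hc' j))
      (mem_sup_right (mul_mem_left _ _ (subset_span ⟨_, rfl⟩)))

section LinearCombination

theorem linearCombination_mem_span {F ι : Type*} [CommSemiring F] [Algebra F R] [Fintype ι]
    (θ : ι → R) (v : ι → F) : Fintype.linearCombination F θ v ∈ span (Set.range θ) := by
  rw [Fintype.linearCombination_apply]
  exact sum_mem _ fun i _ => by
    rw [Algebra.smul_def]
    exact mul_mem_left _ _ (subset_span ⟨i, rfl⟩)

variable {F : Type*} [Field F] [Infinite F] [Algebra F R] [IsNoetherianRing R]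

theorem exists_linearCombination_isSMulRegularQuot {ι : Type*} [Fintype ι] (θ : ι → R)
    {W : Submodule F (ι → F)} (hW : W ≠ ⊤) (hK : K.colon (span (Set.range θ)) ≤ K) :
    ∃ v ∉ W, K.IsSMulRegularQuot (Fintype.linearCombination F θ v) := by
  classical
  let L := Fintype.linearCombination F θ
  have hfin := associatedPrimes.finite R (R ⧸ K)
  let Ws : Finset (Submodule F (ι → F)) :=
    insert W (hfin.toFinset.image fun p => (p.restrictScalars F).comap L)
  have htop : ⊤ ∉ Ws := by
    simp only [Ws, Finset.mem_insert, Finset.mem_image, Set.Finite.mem_toFinset, not_or,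
      not_exists, not_and]
    refine ⟨hW.symm, fun p hp hLp => not_le_of_mem_associatedPrimes hK hp ?_⟩
    refine span_le.mpr (Set.range_subset_iff.mpr fun i => ?_)
    have : Pi.single i 1 ∈ (p.restrictScalars F).comap L := hLp ▸ Submodule.mem_top
    simpa [L] using this
  obtain ⟨v, hv⟩ :=
    (Set.ne_univ_iff_exists_notMem _).mp (Subspace.biUnion_ne_univ_of_top_notMem htop)
  simp only [Set.mem_iUnion, not_exists] at hv
  refine ⟨v, hv W (Finset.mem_insert_self _ _), isSMulRegularQuot_iff_forall_notMem.mpr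
    fun p hp hvp => hv _ (Finset.mem_insert_of_mem (Finset.mem_image_of_mem _ ?_)) hvp⟩
  simpa using hp

theorem exists_linearIndependent_isWeaklyRegularQuot {n : ℕ} {θ : Fin n → R}
    (h : (span (Set.range θ)).HasRegularSeqQuot ⊥ n) {k : ℕ} (hk : k ≤ n) :
    ∃ v : Fin k → Fin n → F, LinearIndependent F v ∧
      (⊥ : Ideal R).IsWeaklyRegularQuot (List.ofFn (Fintype.linearCombination F θ ∘ v)) ∧
      (span (Set.range θ)).HasRegularSeqQuot
        (ofList (List.ofFn (Fintype.linearCombination F θ ∘ v))) (n - k) := by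
  induction k with
  | zero => exact ⟨Fin.elim0, linearIndependent_empty_type, trivial, by simpa using h⟩
  | succ k ih =>
    obtain ⟨v, hv, hreg, hrest⟩ := ih (by omega)
    rw [show n - k = n - (k + 1) + 1 by omega] at hrest
    have hW : Submodule.span F (Set.range v) ≠ ⊤ := fun htop => by
      have := finrank_span_eq_card hv
      rw [htop, finrank_top, Module.finrank_fin_fun, Fintype.card_fin] at this
      omega
    obtain ⟨u, hu, hreg'⟩ := exists_linearCombination_isSMulRegularQuot θ hW hrest.colon_le
    have hofFn : List.ofFn (Fintype.linearCombination F θ ∘ Fin.snoc v u) =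
        List.ofFn (Fintype.linearCombination F θ ∘ v) ++ [Fintype.linearCombination F θ u] := by
      rw [List.ofFn_succ', List.concat_eq_append]
      simp [Function.comp_def]
    refine ⟨Fin.snoc v u, linearIndependent_finSnoc.mpr ⟨hv, hu⟩, ?_, ?_⟩
    · rw [hofFn, isWeaklyRegularQuot_append, bot_sup_eq]
      exact ⟨hreg, hreg', trivial⟩
    · rw [hofFn, ofList_append, ofList_singleton]
      exact hrest.sup_span_singleton (linearCombination_mem_span θ u) hreg'

end LinearCombination

open Matrix in
theorem mem_of_dotProduct_eq_zero_of_isUnit {ι : Type*} [Fintype ι] [DecidableEq ι]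
    {A : Matrix ι ι R} (hA : IsUnit A) {θ c : ι → R}
    (h : ∀ d : ι → R, d ⬝ᵥ (A *ᵥ θ) = 0 → ∀ j, d j ∈ J) (hc : c ⬝ᵥ θ = 0) (i : ι) : c i ∈ J := by
  have hcA : c ᵥ* A⁻¹ ᵥ* A = c := by
    rw [vecMul_vecMul, nonsing_inv_mul _ ((isUnit_iff_isUnit_det A).mp hA), vecMul_one]
  have hd := h (c ᵥ* A⁻¹) (by rw [dotProduct_mulVec, hcA, hc])
  rw [← hcA]
  exact sum_mem J fun j _ => mul_mem_right _ _ (hd j)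

open Matrix in
theorem HasRegularSeqQuot.mem_span_of_dotProduct_eq_zero (F : Type*) [Field F] [Infinite F]
    [Algebra F R] [IsNoetherianRing R] {n : ℕ} {θ c : Fin n → R}
    (h : (span (Set.range θ)).HasRegularSeqQuot ⊥ n) (hc : c ⬝ᵥ θ = 0) (i : Fin n) :
    c i ∈ span (Set.range θ) := by
  obtain ⟨v, hv, hreg, -⟩ := exists_linearIndependent_isWeaklyRegularQuot (F := F) h le_rfl
  have hA : IsUnit ((Matrix.of v).map (algebraMap F R)) :=
    (linearIndependent_rows_iff_isUnit.mp hv).map (algebraMap F R).mapMatrix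
  have hAθ : (Matrix.of v).map (algebraMap F R) *ᵥ θ = Fintype.linearCombination F θ ∘ v := by
    ext j
    simp [mulVec, dotProduct, Fintype.linearCombination_apply, Algebra.smul_def]
  refine mem_of_dotProduct_eq_zero_of_isUnit hA (fun d hd j => ?_) hc i
  rw [hAθ] at hd
  have := mem_sup_span_of_dotProduct_mem hreg (by rw [hd]; exact zero_mem _) j
  rw [bot_sup_eq] at this
  refine span_le.mpr ?_ this
  rintro _ ⟨k, rfl⟩
  exact linearCombination_mem_span θ (v k)

end Ideal

namespace MvPolynomial

section Monomial

variable {σ k : Type*} [CommRing k] (N : σ → ℕ)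

theorem isSMulRegularQuot_X_pow {t : Set σ} {j : σ} (hj : j ∉ t) :
    (Ideal.span ((fun i => X i ^ N i) '' t)).IsSMulRegularQuot (X j ^ N j : MvPolynomial σ k) := by
  have hspan : (fun i => (X i ^ N i : MvPolynomial σ k)) '' t =
      (fun s => monomial s 1) '' ((fun i => Finsupp.single i (N i)) '' t) := by
    rw [Set.image_image]
    simp only [X_pow_eq_monomial]
  intro u hu
  rw [hspan, mem_ideal_span_monomial_image] at hu ⊢
  intro m hm
  obtain ⟨_, ⟨i, hi, rfl⟩, hle⟩ := hu (Finsupp.single j (N j) + m) <| by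
    rw [mem_support_iff, X_pow_eq_monomial, coeff_monomial_mul, one_mul]
    exact mem_support_iff.mp hm
  have hij : i ≠ j := fun h => hj (h ▸ hi)
  refine ⟨_, ⟨i, hi, rfl⟩, ?_⟩
  rw [Finsupp.single_le_iff] at hle ⊢
  simpa [Finsupp.single_eq_of_ne hij] using hle

theorem isWeaklyRegularQuot_map_X_pow {l : List σ} (hl : l.Nodup) {t : Set σ}
    (hlt : ∀ i ∈ l, i ∉ t) :
    (Ideal.span ((fun i => X i ^ N i) '' t)).IsWeaklyRegularQuot
      (l.map fun i => (X i ^ N i : MvPolynomial σ k)) := by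
  induction l generalizing t with
  | nil => trivial
  | cons j l ih =>
    rw [List.nodup_cons] at hl
    refine ⟨isSMulRegularQuot_X_pow N (hlt j (by simp)), ?_⟩
    rw [sup_comm, ← Ideal.span_insert,
      ← Set.image_insert_eq (f := fun i => (X i ^ N i : MvPolynomial σ k))]
    refine ih hl.2 fun i hi hit => ?_
    rcases hit with rfl | hit
    exacts [hl.1 hi, hlt i (by simp [hi]) hit]

theorem hasRegularSeqQuot_of_X_pow_mem {n : ℕ} {J : Ideal (MvPolynomial (Fin n) k)}
    (N : Fin n → ℕ) (hJ : ∀ i, X i ^ N i ∈ J) : J.HasRegularSeqQuot ⊥ n := by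
  refine ⟨(List.finRange n).map fun i => X i ^ N i, by simp, by simpa using hJ, ?_⟩
  simpa using isWeaklyRegularQuot_map_X_pow (k := k) N (List.nodup_finRange n) (t := ∅) (by simp)

end Monomial

section Nullstellensatz

variable {σ k : Type*} [Field k] [IsAlgClosed k] [Finite σ]

theorem exists_X_pow_mem_of_eval_eq_zero {ι : Type*} {θ : ι → MvPolynomial σ k}
    (hθ : ∀ p : σ → k, (∀ i, eval p (θ i) = 0) → p = 0) (j : σ) :
    ∃ N, X j ^ N ∈ Ideal.span (Set.range θ) := by
  refine Ideal.mem_radical_iff.mp ?_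
  rw [← vanishingIdeal_zeroLocus_eq_radical (K := k), mem_vanishingIdeal_iff]
  intro x hx
  rw [hθ x fun i => hx _ (Ideal.subset_span ⟨i, rfl⟩)]
  simp

theorem mem_span_of_dotProduct_eq_zero {n : ℕ} {θ c : Fin n → MvPolynomial (Fin n) k}
    (hθ : ∀ p : Fin n → k, (∀ i, eval p (θ i) = 0) → p = 0) (hc : c ⬝ᵥ θ = 0) (i : Fin n) :
    c i ∈ Ideal.span (Set.range θ) := by
  choose N hN using exists_X_pow_mem_of_eval_eq_zero hθ
  exact (hasRegularSeqQuot_of_X_pow_mem N hN).mem_span_of_dotProduct_eq_zero k hc i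

end Nullstellensatz

section Weight

variable {σ R M : Type*} [CommSemiring R] [AddCommMonoid M] [PartialOrder M]
  [CanonicallyOrderedAdd M] {w : σ → M} {G : Set (MvPolynomial σ R)} {D : M}

theorem le_weight_of_mem_support_of_mem_span
    (hG : ∀ g ∈ G, ∃ e, D ≤ e ∧ g.IsWeightedHomogeneous w e) {x : MvPolynomial σ R}
    (hx : x ∈ Ideal.span G) {m : σ →₀ ℕ} (hm : m ∈ x.support) : D ≤ Finsupp.weight w m := by
  classical
  induction hx using Submodule.span_induction generalizing m with
  | mem g hg =>
    obtain ⟨e, hDe, hge⟩ := hG g hg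
    exact (hge (mem_support_iff.mp hm)) ▸ hDe
  | zero => simp at hm
  | add x y _ _ hx hy =>
    rcases Finset.mem_union.mp (support_add hm) with h | h
    exacts [hx h, hy h]
  | smul a x _ hx =>
    obtain ⟨u, -, v, hv, rfl⟩ := Finset.mem_add.mp (support_mul a x hm)
    rw [map_add]
    exact (hx hv).trans le_add_self

theorem eq_zero_of_mem_span_of_weight_lt
    (hG : ∀ g ∈ G, ∃ e, D ≤ e ∧ g.IsWeightedHomogeneous w e) {x : MvPolynomial σ R}
    (hx : x ∈ Ideal.span G) (hlt : ∀ m ∈ x.support, Finsupp.weight w m < D) : x = 0 := by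
  by_contra hx0
  obtain ⟨m, hm⟩ := Finset.nonempty_of_ne_empty (mt support_eq_empty.mp hx0)
  exact (hlt m hm).not_ge (le_weight_of_mem_support_of_mem_span hG hx hm)

theorem weight_lt_of_mem_support_sum_mul_pderiv [Fintype σ] {w : σ → ℕ} {f : MvPolynomial σ R}
    {d : ℕ} (hf : f.IsWeightedHomogeneous w d) (hwd : ∀ i, w i ≤ d) {c : σ → MvPolynomial σ R}
    (hc : ∀ i, ∀ m ∈ (c i).support, Finsupp.weight w m < w i) {m : σ →₀ ℕ}
    (hm : m ∈ (∑ i, c i * pderiv i f).support) : Finsupp.weight w m < d := by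
  classical
  obtain ⟨i, -, hi⟩ := Finset.mem_biUnion.mp (support_sum hm)
  obtain ⟨u, hu, v, hv, rfl⟩ := Finset.mem_add.mp (support_mul _ _ hi)
  have hdeg := hf.pderiv (n' := d - w i) (by have := hwd i; omega) (mem_support_iff.mp hv)
  have := hc i u hu
  have := hwd i
  rw [map_add, hdeg]
  omega

end Weight

end MvPolynomial

open MvPolynomial

namespace Derivation

theorem finset_sum_apply {R A M ι : Type*} [CommSemiring R] [CommSemiring A]
    [Algebra R A] [AddCommMonoid M] [Module A M] [Module R M] (s : Finset ι)
    (D : ι → Derivation R A M) (a : A) : (∑ i ∈ s, D i) a = ∑ i ∈ s, D i a := by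
  rw [← coeFnAddMonoidHom_apply, map_sum, Finset.sum_apply]
  rfl

variable {σ R : Type*} [Fintype σ] [CommRing R] {I : Ideal (MvPolynomial σ R)}
  (δ : Derivation R (MvPolynomial σ R ⧸ I) (MvPolynomial σ R ⧸ I)) {c : σ → MvPolynomial σ R}

theorem apply_mk_eq (hc : ∀ i, Ideal.Quotient.mk I (c i) = δ (Ideal.Quotient.mk I (X i)))
    (p : MvPolynomial σ R) :
    δ (Ideal.Quotient.mk I p) = Ideal.Quotient.mk I (∑ i, c i * pderiv i p) := by
  classical
  have key : δ.compAlgebraMap (MvPolynomial σ R) = ∑ i, Ideal.Quotient.mk I (c i) •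
      (Algebra.linearMap (MvPolynomial σ R) (MvPolynomial σ R ⧸ I)).compDer (pderiv i) := by
    refine derivation_ext fun j => ?_
    simp [finset_sum_apply, Pi.single_apply, hc]
  simpa [finset_sum_apply] using congr($key p)

theorem sum_mul_pderiv_mem (hc : ∀ i, Ideal.Quotient.mk I (c i) = δ (Ideal.Quotient.mk I (X i)))
    {p : MvPolynomial σ R} (hp : p ∈ I) : ∑ i, c i * pderiv i p ∈ I := by
  rw [← Ideal.Quotient.eq_zero_iff_mem, ← δ.apply_mk_eq hc, Ideal.Quotient.eq_zero_iff_mem.mpr hp,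
    map_zero]

end Derivation

theorem stmt_10_general (s : ℕ) (hs : 0 < s) (d : ℕ) (w : Fin s → ℕ)
    (hmono : Antitone w) (h2 : 2 * w ⟨0, hs⟩ ≤ d)
    (f : MvPolynomial (Fin s) ℂ) (hf : f.IsWeightedHomogeneous w d)
    (hiso : ∀ p : Fin s → ℂ, (∀ i, eval p (pderiv i f) = 0) → p = 0)
    (S : Set (MvPolynomial (Fin s) ℂ))
    (hS : ∀ g ∈ S, ∃ e, d ≤ e ∧ g.IsWeightedHomogeneous w e)
    (I : Ideal (MvPolynomial (Fin s) ℂ)) (hI : I = Ideal.span ({f} ∪ S))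
    (δ : Derivation ℂ (MvPolynomial (Fin s) ℂ ⧸ I) (MvPolynomial (Fin s) ℂ ⧸ I))
    (e : ℤ) (he : e < 0)
    (hδhom : ∀ (m : ℕ) (a : MvPolynomial (Fin s) ℂ), a.IsWeightedHomogeneous w m →
      ∃ b : MvPolynomial (Fin s) ℂ,
        Ideal.Quotient.mk I b = δ (Ideal.Quotient.mk I a) ∧
        (b = 0 ∨ ∃ m' : ℕ, (m' : ℤ) = (m : ℤ) + e ∧ b.IsWeightedHomogeneous w m')) :
    δ = 0 := by
  choose c hc hcdeg using fun i => hδhom (w i) (X i) (isWeightedHomogeneous_X ℂ w i)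
  have hw : ∀ i, w i ≤ w ⟨0, hs⟩ := fun i => hmono (show (⟨0, hs⟩ : Fin s) ≤ i from Nat.zero_le _)
  have hclow : ∀ i, ∀ m ∈ (c i).support, Finsupp.weight w m < w i := fun i m hm => by
    rcases hcdeg i with h0 | ⟨m', hm', hhom⟩
    · simp [h0] at hm
    · rw [hhom (mem_support_iff.mp hm)]
      omega
  have hsyz : ∑ i, c i * pderiv i f = 0 := by
    have hG : ∀ g ∈ ({f} ∪ S), ∃ e, d ≤ e ∧ g.IsWeightedHomogeneous w e := by
      rintro g (rfl | hg)
      exacts [⟨d, le_rfl, hf⟩, hS g hg]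
    have hfI : f ∈ I := hI ▸ Ideal.subset_span (Or.inl rfl)
    exact eq_zero_of_mem_span_of_weight_lt hG (hI ▸ δ.sum_mul_pderiv_mem hc hfI) fun m hm =>
      weight_lt_of_mem_support_sum_mul_pderiv hf (fun i => by grind) hclow hm
  have hc0 : ∀ i, c i = 0 := fun i => by
    refine eq_zero_of_mem_span_of_weight_lt (w := w) (D := w ⟨0, hs⟩) ?_
      (mem_span_of_dotProduct_eq_zero hiso hsyz i) fun m hm => (hclow i m hm).trans_le (hw i)
    rintro _ ⟨j, rfl⟩
    exact ⟨d - w j, by grind, hf.pderiv (by grind)⟩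
  ext x
  obtain ⟨p, rfl⟩ := Ideal.Quotient.mk_surjective x
  simp [δ.apply_mk_eq hc p, hc0]

theorem stmt_10 (s : ℕ) (hs : 0 < s) (d : ℕ) (w : Fin s → ℕ)
    (hw : ∀ i, 0 < w i) (hmono : Antitone w) (h2 : 2 * w ⟨0, hs⟩ ≤ d)
    (f : MvPolynomial (Fin s) ℂ) (hf : f.IsWeightedHomogeneous w d)
    (hiso : ∀ p : Fin s → ℂ, (∀ i, eval p (pderiv i f) = 0) → p = 0)
    (S : Set (MvPolynomial (Fin s) ℂ))
    (hS : ∀ g ∈ S, ∃ e, d ≤ e ∧ g.IsWeightedHomogeneous w e)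
    (I : Ideal (MvPolynomial (Fin s) ℂ)) (hI : I = Ideal.span ({f} ∪ S))
    (δ : Derivation ℂ (MvPolynomial (Fin s) ℂ ⧸ I) (MvPolynomial (Fin s) ℂ ⧸ I))
    (e : ℤ) (he : e < 0)
    (hδhom : ∀ (m : ℕ) (a : MvPolynomial (Fin s) ℂ), a.IsWeightedHomogeneous w m →
      ∃ b : MvPolynomial (Fin s) ℂ,
        Ideal.Quotient.mk I b = δ (Ideal.Quotient.mk I a) ∧
        (b = 0 ∨ ∃ m' : ℕ, (m' : ℤ) = (m : ℤ) + e ∧ b.IsWeightedHomogeneous w m')) :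
    δ = 0 :=
  stmt_10_general s hs d w hmono h2 f hf hiso S hS I hI δ e he hδhom
end

section
/- Let f ∈ C[x1,...,xs] be weighted homogeneous of degree d with respect to w with d ≥ 2w1 ≥ ... ≥ 2ws > 0, defining an isolated hypersurface singularity, and suppose n ≥ 2 and moreover that the ideal J_n(f) of maximal minors of the n-th Jacobian matrix is contained in J_1(f)^3 (as holds whenever s ≥ 3 or n ≥ 3, and can be checked directly for s = n = 2). Then every nonzero weighted homogeneous generator g of J_n(f) satisfies deg_w(g) ≥ d. -/
/-! Every partial derivative `∂f/∂xᵢ` is weighted homogeneous of degree `d - wᵢ ≥ d - w₁`, so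
every monomial occurring in an element of `J₁(f)³` has weight at least `3(d - w₁)`, and
`3(d - w₁) ≥ d` because `2w₁ ≤ d`. A nonzero weighted homogeneous generator of `J_n(f)` lies in
`J₁(f)³`, hence its degree is at least `d`. -/

open MvPolynomial

noncomputable section

/-- Iterated partial derivative `∂^γ f / ∂x^γ` for a multi-index `γ`. -/
def pdMulti {s : ℕ} (γ : Fin s → ℕ) (f : MvPolynomial (Fin s) ℂ) :
    MvPolynomial (Fin s) ℂ :=
  ((List.finRange s).map (fun i => fun g => (fun h => pderiv i h)^[γ i] g)).foldl
    (fun g h => h g) f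

/-- The `n`-th order Jacobian matrix of `f`: rows are indexed by multi-indices `β` with
`|β| ≤ n - 1`, columns by multi-indices `α` with `1 ≤ |α| ≤ n`, and the `(β, α)`-entry is
`(1/(α-β)!) ∂^(α-β) f / ∂x^(α-β)` when `β ≤ α` componentwise and `β ≠ α`, and `0` otherwise. -/
def jacN (n s : ℕ) (f : MvPolynomial (Fin s) ℂ) :
    Matrix {β : Fin s → Fin (n + 1) // ∑ i, (β i : ℕ) ≤ n - 1}
      {α : Fin s → Fin (n + 1) // 1 ≤ ∑ i, (α i : ℕ) ∧ ∑ i, (α i : ℕ) ≤ n}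
      (MvPolynomial (Fin s) ℂ) :=
  fun β α =>
    if (∀ i, (β.1 i : ℕ) ≤ (α.1 i : ℕ)) ∧ β.1 ≠ α.1 then
      C ((∏ i, (((α.1 i : ℕ) - (β.1 i : ℕ)).factorial : ℂ)))⁻¹ *
        pdMulti (fun i => (α.1 i : ℕ) - (β.1 i : ℕ)) f
    else 0

/-- The ideal of maximal minors of the `n`-th order Jacobian matrix. -/
def jacIdealN (n s : ℕ) (f : MvPolynomial (Fin s) ℂ) : Ideal (MvPolynomial (Fin s) ℂ) :=
  Ideal.span {g : MvPolynomial (Fin s) ℂ |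
    ∃ c : {β : Fin s → Fin (n + 1) // ∑ i, (β i : ℕ) ≤ n - 1} →
        {α : Fin s → Fin (n + 1) // 1 ≤ ∑ i, (α i : ℕ) ∧ ∑ i, (α i : ℕ) ≤ n},
      Function.Injective c ∧ g = ((jacN n s f).submatrix id c).det}

namespace MvPolynomial

variable {σ R : Type*} [CommSemiring R]

theorem le_weight_of_mem_support_mul {w : σ → ℕ} {k l : ℕ} {p q : MvPolynomial σ R}
    (hp : ∀ m ∈ p.support, k ≤ Finsupp.weight w m)
    (hq : ∀ m ∈ q.support, l ≤ Finsupp.weight w m) :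
    ∀ m ∈ (p * q).support, k + l ≤ Finsupp.weight w m := by
  classical
  intro m hm
  obtain ⟨a, ha, b, hb, rfl⟩ := Finset.mem_add.mp (support_mul p q hm)
  rw [map_add]
  exact add_le_add (hp a ha) (hq b hb)

variable (R) in
def weightedOrderIdeal (w : σ → ℕ) (k : ℕ) : Ideal (MvPolynomial σ R) where
  carrier := {p | ∀ m ∈ p.support, k ≤ Finsupp.weight w m}
  zero_mem' := by simp
  add_mem' {p q} hp hq m hm := by
    classical
    rcases Finset.mem_union.mp (support_add hm) with hm | hm
    exacts [hp m hm, hq m hm]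
  smul_mem' c p hp m hm := by
    simpa using le_weight_of_mem_support_mul (k := 0) (fun _ _ => Nat.zero_le _) hp m hm

variable {w : σ → ℕ}

theorem weightedOrderIdeal_antitone : Antitone (weightedOrderIdeal R w) :=
  fun _ _ hkl _ hp m hm => hkl.trans (hp m hm)

theorem weightedOrderIdeal_mul_le (k l : ℕ) :
    weightedOrderIdeal R w k * weightedOrderIdeal R w l ≤ weightedOrderIdeal R w (k + l) :=
  Ideal.mul_le.mpr fun _ hp _ hq => le_weight_of_mem_support_mul hp hq

theorem weightedOrderIdeal_pow_le (k n : ℕ) :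
    weightedOrderIdeal R w k ^ n ≤ weightedOrderIdeal R w (n * k) := by
  induction n with
  | zero =>
    rw [pow_zero, Ideal.one_eq_top, zero_mul]
    exact fun _ _ _ _ => Nat.zero_le _
  | succ n ih =>
    rw [pow_succ, Nat.succ_mul]
    exact (Ideal.mul_mono_left ih).trans (weightedOrderIdeal_mul_le _ _)

theorem IsWeightedHomogeneous.mem_weightedOrderIdeal {k : ℕ} {p : MvPolynomial σ R}
    (hp : p.IsWeightedHomogeneous w k) : p ∈ weightedOrderIdeal R w k :=
  fun _ hm => (hp (mem_support_iff.mp hm)).ge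

theorem IsWeightedHomogeneous.le_of_mem_weightedOrderIdeal {k e : ℕ} {p : MvPolynomial σ R}
    (hp : p.IsWeightedHomogeneous w e) (hp0 : p ≠ 0) (hk : p ∈ weightedOrderIdeal R w k) :
    k ≤ e := by
  obtain ⟨m, hm⟩ := exists_coeff_ne_zero hp0
  exact hp hm ▸ hk m (mem_support_iff.mpr hm)

theorem span_pderiv_le_weightedOrderIdeal {d k : ℕ} {f : MvPolynomial σ R}
    (hf : f.IsWeightedHomogeneous w d) (hk : ∀ i, w i ≤ k) (hkd : k ≤ d) :
    Ideal.span (Set.range fun i => pderiv i f) ≤ weightedOrderIdeal R w (d - k) := by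
  rw [Ideal.span_le]
  rintro _ ⟨i, rfl⟩
  exact weightedOrderIdeal_antitone (Nat.sub_le_sub_left (hk i) d)
    (hf.pderiv (Nat.sub_add_cancel ((hk i).trans hkd))).mem_weightedOrderIdeal

end MvPolynomial

theorem stmt_11_general (s : ℕ) (hs : 0 < s) (d : ℕ) (w : Fin s → ℕ)
    (hmono : Antitone w) (h2 : 2 * w ⟨0, hs⟩ ≤ d)
    (f : MvPolynomial (Fin s) ℂ) (hf : f.IsWeightedHomogeneous w d)
    (n : ℕ)
    (hsub : jacIdealN n s f ≤ (Ideal.span (Set.range fun i => pderiv i f)) ^ 3) :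
    ∀ g : MvPolynomial (Fin s) ℂ,
      (∃ c : {β : Fin s → Fin (n + 1) // ∑ i, (β i : ℕ) ≤ n - 1} →
          {α : Fin s → Fin (n + 1) // 1 ≤ ∑ i, (α i : ℕ) ∧ ∑ i, (α i : ℕ) ≤ n},
        Function.Injective c ∧ g = ((jacN n s f).submatrix id c).det) →
      g ≠ 0 → ∀ e : ℕ, g.IsWeightedHomogeneous w e → d ≤ e := by
  intro g hg hg0 e hge
  have hw_le : ∀ i, w i ≤ w ⟨0, hs⟩ := fun i => hmono (Nat.zero_le i.val)
  have hJ3 : (Ideal.span (Set.range fun i => pderiv i f)) ^ 3 ≤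
      weightedOrderIdeal ℂ w (3 * (d - w ⟨0, hs⟩)) :=
    (Ideal.pow_right_mono (span_pderiv_le_weightedOrderIdeal hf hw_le (by omega)) 3).trans
      (weightedOrderIdeal_pow_le _ 3)
  have hdeg := hge.le_of_mem_weightedOrderIdeal hg0 (hJ3 (hsub (Ideal.subset_span hg)))
  omega

theorem stmt_11 (s : ℕ) (hs : 0 < s) (d : ℕ) (w : Fin s → ℕ)
    (hw : ∀ i, 0 < w i) (hmono : Antitone w) (h2 : 2 * w ⟨0, hs⟩ ≤ d)
    (f : MvPolynomial (Fin s) ℂ) (hf : f.IsWeightedHomogeneous w d)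
    (hiso : ∀ p : Fin s → ℂ, (∀ i, eval p (pderiv i f) = 0) → p = 0)
    (n : ℕ) (hn : 2 ≤ n)
    (hsub : jacIdealN n s f ≤ (Ideal.span (Set.range fun i => pderiv i f)) ^ 3) :
    ∀ g : MvPolynomial (Fin s) ℂ,
      (∃ c : {β : Fin s → Fin (n + 1) // ∑ i, (β i : ℕ) ≤ n - 1} →
          {α : Fin s → Fin (n + 1) // 1 ≤ ∑ i, (α i : ℕ) ∧ ∑ i, (α i : ℕ) ≤ n},
        Function.Injective c ∧ g = ((jacN n s f).submatrix id c).det) →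
      g ≠ 0 → ∀ e : ℕ, g.IsWeightedHomogeneous w e → d ≤ e :=
  stmt_11_general s hs d w hmono h2 f hf n hsub
end
end
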